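/- The ring ℤ[t_0, ..., t_r]/(P_{r+1}(t_0, ..., t_r) − 1) is isomorphic as a ℤ-algebra to the subring of ℚ(u_0, ..., u_{r-1}) generated by u_0, ..., u_{r-1} and x_0, ..., x_{r-1}, where x_i = (u_{i-1} + u_{i+1})/u_i with u_{-1} = u_r = 1. -/

import Mathlib

open MvPolynomial Polynomial

/-- Generalized Chebyshev evaluation: `cheb n t = P_n(t 0, ..., t (n-1))`,
where `P_0 = 1`, `P_1(t_0) = t_0`, and
`P_{n+1}(t_0,...,t_n) = t_n * P_n(t_0,...,t_{n-1}) - P_{n-1}(t_0,...,t_{n-2})`. -/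
def cheb {R : Type*} [CommRing R] : ℕ → (ℕ → R) → R
  | 0, _ => 1
  | 1, t => t 0
  | (n + 2), t => t (n + 1) * cheb (n + 1) t - cheb n t

/-- The field `ℚ(u_0, ..., u_{r-1})`. -/
abbrev FF (r : ℕ) := FractionRing (MvPolynomial (Fin r) ℚ)

/-- The indeterminates `u_i` for `0 ≤ i < r`, extended by `u_i = 1` outside this range
(so that `u_{-1} = u_r = 1`). -/
noncomputable def uu (r : ℕ) (i : ℤ) : FF r :=
  if h : 0 ≤ i ∧ i < r then
    algebraMap (MvPolynomial (Fin r) ℚ) (FF r) (X (⟨i.toNat, by omega⟩ : Fin r))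
  else 1

/-- The cluster characters of the simple modules: `x_i = (u_{i-1} + u_{i+1}) / u_i`. -/
noncomputable def xx (r : ℕ) (i : ℤ) : FF r := (uu r (i - 1) + uu r (i + 1)) / uu r i

/-
Let `ψ : ℤ[t_0, …, t_r] → ℚ(u)` send `t_i ↦ x_i` for `i < r` and `t_r ↦ u_{r-1}`. Its image is
the algebra generated by the `u_i` and `x_i`, because `u_{j-1} = x_j u_j - u_{j+1}` recovers every
`u_j` from `u_{r-1}` and the `x_j`. The continuants `P_n(x_0, …, x_{n-1})` and the sequence
`u_{n-1}` solve the same three-term recurrence, so their Casoratian is constant; this gives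
`P_{r+1}(x_0, …, x_{r-1}, u_{r-1}) = 1`.

For the kernel, expand in `t_0`: `P_{r+1} - 1 = a t_0 - b` with `a, b` coprime in
`R = ℤ[t_1, …, t_r]`. On `R`, `ψ` is injective: `x_1, …, x_{r-1}, u_{r-1}` are `r` elements
generating an algebra that contains all the `u_j`, hence algebraically independent. So `ψ f = 0`
means that `f`, as a polynomial in `t_0` over `R`, vanishes at `b / a` in `Frac R`, and Gauss's
lemma turns divisibility by the primitive `a t_0 - b` over `Frac R` into divisibility over `R`.
-/

section Continuant

variable {R : Type*} [CommRing R]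

theorem map_cheb {S F : Type*} [CommRing S] [FunLike F R S] [RingHomClass F R S] (f : F) :
    ∀ (n : ℕ) (t : ℕ → R), f (cheb n t) = cheb n fun i => f (t i)
  | 0, _ => by simp [cheb]
  | 1, _ => by simp [cheb]
  | n + 2, t => by simp only [cheb, map_sub, map_mul, map_cheb f (n + 1) t, map_cheb f n t]

theorem cheb_congr : ∀ (n : ℕ) {t t' : ℕ → R}, (∀ i < n, t i = t' i) → cheb n t = cheb n t'
  | 0, _, _, _ => rfl
  | 1, _, _, h => h 0 one_pos
  | n + 2, _, _, h => by
      simp only [cheb]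
      rw [h (n + 1) (by omega), cheb_congr (n + 1) fun i hi => h i (by omega),
        cheb_congr n fun i hi => h i (by omega)]

theorem cheb_add_two_eq_mul_sub (t : ℕ → R) : ∀ n : ℕ,
    cheb (n + 2) t = t 0 * cheb (n + 1) (fun i => t (i + 1)) - cheb n fun i => t (i + 2)
  | 0 => by simp only [cheb]; ring
  | 1 => by simp only [cheb]; ring
  | n + 2 => by
      have h₁ := cheb_add_two_eq_mul_sub t (n + 1)
      have h₀ := cheb_add_two_eq_mul_sub t n
      simp only [cheb] at h₁ h₀ ⊢
      rw [h₁, h₀]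
      ring

/-- The Casoratian of `P_n(t)` and of a solution `v` of the same recurrence is constant. -/
theorem cheb_succ_mul_sub_cheb_mul (t v : ℕ → R) : ∀ n : ℕ,
    (∀ i ≤ n, t i * v (i + 1) = v i + v (i + 2)) →
      cheb (n + 1) t * v (n + 1) - cheb n t * v (n + 2) = v 0
  | 0, h => by simp only [cheb]; linear_combination h 0 le_rfl
  | n + 1, h => by
      have ih := cheb_succ_mul_sub_cheb_mul t v n fun i hi => h i (by omega)
      simp only [cheb]
      linear_combination ih + cheb (n + 1) t * h (n + 1) le_rfl

theorem cheb_const_two : ∀ n : ℕ, cheb n (fun _ => (2 : R)) = n + 1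
  | 0 => by simp [cheb]
  | 1 => by simp only [cheb]; norm_num
  | n + 2 => by
      simp only [cheb, cheb_const_two (n + 1), cheb_const_two n]
      push_cast
      ring

end Continuant

namespace Polynomial

variable {R : Type*} [CommRing R]

theorem isPrimitive_C_mul_X_sub_C {a b : R} (h : IsRelPrime a b) :
    (C a * X - C b).IsPrimitive := fun r hr => by
  rw [C_dvd_iff_dvd_coeff] at hr
  exact h (by simpa using hr 1) (by simpa using hr 0)

theorem isRelPrime_C_of_isRelPrime_coeff [IsDomain R] {p : R[X]} {b : R} (hb : b ≠ 0) (i : ℕ)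
    (h : IsRelPrime (p.coeff i) b) : IsRelPrime p (C b) := by
  intro q hqp hqb
  have hq : q = C (q.coeff 0) :=
    eq_C_of_degree_le_zero ((degree_le_of_dvd hqb (C_ne_zero.2 hb)).trans degree_C_le)
  rw [hq, C_dvd_iff_dvd_coeff] at hqp hqb
  rw [hq]
  exact isUnit_C.2 (h (hqp i) (by simpa using hqb 0))

theorem eval₂_eq_zero_iff_dvd_of_isPrimitive [IsDomain R] [IsGCDMonoid R] {K : Type*} [Field K]
    {ρ : R →+* K} (hρ : Function.Injective ρ) {a b : R} (hG : (C a * X - C b).IsPrimitive)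
    {ξ : K} (hξ : ρ a * ξ = ρ b) {f : R[X]} : f.eval₂ ρ ξ = 0 ↔ C a * X - C b ∣ f := by
  refine ⟨fun hf => ?_, fun ⟨q, hq⟩ => by simp [hq, eval₂_mul, hξ]⟩
  let L := FractionRing R
  let Φ : L →+* K := IsFractionRing.lift hρ
  have hΦ (x : R) : Φ (algebraMap R L x) = ρ x := IsFractionRing.lift_algebraMap _ _
  have ha : algebraMap R L a ≠ 0 := by
    refine fun ha => hG.ne_zero ?_
    rw [IsFractionRing.to_map_eq_zero_iff] at ha
    have hb : ρ b = 0 := by rw [← hξ, ha, map_zero, zero_mul]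
    simp [ha, (map_eq_zero_iff ρ hρ).1 hb]
  set β : L := algebraMap R L b / algebraMap R L a
  have hΦβ : Φ β = ξ := by
    rw [map_div₀, hΦ, hΦ, div_eq_iff (by rwa [← hΦ, _root_.map_ne_zero]), ← hξ, mul_comm]
  have hroot : (f.map (algebraMap R L)).IsRoot β := by
    apply Φ.injective
    rw [eval_map, hom_eval₂, hΦβ, map_zero]
    convert hf
    ext x
    exact hΦ x
  have hGmap : (C a * X - C b).map (algebraMap R L) = C (algebraMap R L a) * (X - C β) := by
    simp only [Polynomial.map_sub, Polynomial.map_mul, map_C, map_X, mul_sub, ← C_mul, β,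
      mul_div_cancel₀ _ ha]
  refine hG.dvd_of_fraction_map_dvd_fraction_map (K := L) ?_
  rw [hGmap, (isUnit_C.2 ha.isUnit).mul_left_dvd]
  exact dvd_iff_isRoot.2 hroot

end Polynomial

namespace MvPolynomial

variable {R : Type*} [CommRing R]

variable (R) in
noncomputable def tvar (n k : ℕ) : MvPolynomial (Fin n) R := if h : k < n then X ⟨k, h⟩ else 0

theorem finSuccEquiv_tvar_zero (n : ℕ) : finSuccEquiv R n (tvar R (n + 1) 0) = Polynomial.X := by
  simpa [tvar] using finSuccEquiv_X_zero

theorem finSuccEquiv_tvar_succ (n k : ℕ) :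
    finSuccEquiv R n (tvar R (n + 1) (k + 1)) = Polynomial.C (tvar R n k) := by
  by_cases hk : k < n
  · simpa [tvar, hk] using finSuccEquiv_X_succ (j := ⟨k, hk⟩)
  · simp [tvar, hk]

theorem finSuccEquiv_cheb_tvar (n k : ℕ) :
    finSuccEquiv R n (cheb (k + 2) (tvar R (n + 1))) =
      Polynomial.X * Polynomial.C (cheb (k + 1) (tvar R n)) -
        Polynomial.C (cheb k fun i => tvar R n (i + 1)) := by
  simp only [cheb_add_two_eq_mul_sub, map_sub, map_mul, map_cheb, finSuccEquiv_tvar_zero,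
    finSuccEquiv_tvar_succ]

theorem aeval_tvar {S : Type*} [CommRing S] [Algebra R S] {n k : ℕ} (g : Fin n → S)
    (hk : k < n) :
    aeval g (tvar R n k) = g ⟨k, hk⟩ := by
  simp [tvar, hk]

theorem aeval_eq_eval₂_finSuccEquiv {S : Type*} [CommRing S] [Algebra R S] {n : ℕ}
    (g : Fin (n + 1) → S) (f : MvPolynomial (Fin (n + 1)) R) :
    aeval g f = (finSuccEquiv R n f).eval₂ (aeval fun i => g i.succ).toRingHom (g 0) := by
  induction f using MvPolynomial.induction_on with
  | C a =>
    rw [aeval_C, ← algebraMap_eq, AlgEquiv.commutes, Polynomial.algebraMap_apply,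
      Polynomial.eval₂_C]
    simp
  | add p q hp hq => simp [hp, hq]
  | mul_X p i hp =>
    simp only [map_mul, hp, Polynomial.eval₂_mul]
    congr 1
    refine Fin.cases ?_ (fun j => ?_) i <;> simp [finSuccEquiv_X_zero, finSuccEquiv_X_succ]

end MvPolynomial

theorem IsFractionRing.isAlgebraic_of_forall_mem {R A K : Type*} [CommRing R] [CommRing A]
    [Field K] [Algebra A K] [IsFractionRing A K] [Algebra R K] (S : Subalgebra R K)
    (h : ∀ a, algebraMap A K a ∈ S) : Algebra.IsAlgebraic S K := by
  refine ⟨fun z => ?_⟩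
  obtain ⟨⟨a, s⟩, rfl⟩ := IsLocalization.mk'_surjective (nonZeroDivisors A) z
  refine IsAlgebraic.of_mul (IsLocalization.map_units K s).mem_nonZeroDivisors
    (isAlgebraic_algebraMap (⟨_, h s⟩ : S)) ?_
  rw [IsLocalization.mul_mk'_eq_mk'_of_mul, IsLocalization.mk'_mul_cancel_left]
  exact isAlgebraic_algebraMap (⟨_, h a⟩ : S)

theorem uu_ne_zero (r : ℕ) (i : ℤ) : uu r i ≠ 0 := by
  unfold uu
  split_ifs
  · exact (IsFractionRing.to_map_ne_zero_of_mem_nonZeroDivisors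
      (mem_nonZeroDivisors_of_ne_zero (X_ne_zero _)))
  · exact one_ne_zero

theorem uu_eq_one_of_not_mem (r : ℕ) {i : ℤ} (h : ¬(0 ≤ i ∧ i < r)) : uu r i = 1 := dif_neg h

theorem uu_natCast (r : ℕ) (i : Fin r) :
    uu r (i : ℕ) = algebraMap (MvPolynomial (Fin r) ℚ) (FF r) (X i) := by
  simp [uu]

theorem xx_mul_uu (r : ℕ) (i : ℤ) : xx r i * uu r i = uu r (i - 1) + uu r (i + 1) :=
  div_mul_cancel₀ _ (uu_ne_zero r i)

theorem cheb_xx_uu_eq_one {r : ℕ} (hr : 1 ≤ r) :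
    cheb (r + 1) (fun k => if k < r then xx r k else uu r (r - 1)) = 1 := by
  obtain ⟨m, rfl⟩ : ∃ m, r = m + 1 := ⟨r - 1, by omega⟩
  set w : ℕ → FF (m + 1) := fun k => if k < m + 1 then xx (m + 1) k else uu (m + 1) (m + 1 - 1)
  have hcas := cheb_succ_mul_sub_cheb_mul w (fun k => uu (m + 1) (k - 1)) m fun i hi => by
    simp only [w, if_pos (show i < m + 1 by omega)]
    push_cast
    convert xx_mul_uu (m + 1) i using 3 <;> ring
  have h₀ : uu (m + 1) ((0 : ℕ) - 1) = 1 := uu_eq_one_of_not_mem _ (by omega)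
  have h₁ : uu (m + 1) ((m + 1 : ℕ) - 1) = uu (m + 1) m := by push_cast; ring_nf
  have h₂ : uu (m + 1) ((m + 2 : ℕ) - 1) = 1 := uu_eq_one_of_not_mem _ (by push_cast; omega)
  beta_reduce at hcas
  rw [h₀, h₁, h₂, mul_one] at hcas
  have hw : w (m + 1) = uu (m + 1) m := by simp [w]
  show w (m + 1) * cheb (m + 1) w - cheb m w = 1
  rw [hw, ← hcas, mul_comm]

theorem uu_mem_of_xx_mem {R : Type*} [CommRing R] {r : ℕ} [Algebra R (FF r)]
    (S : Subalgebra R (FF r)) (hu : uu r (r - 1) ∈ S) (hx : ∀ i : ℤ, 1 ≤ i → i < r → xx r i ∈ S)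
    (i : ℤ) : uu r i ∈ S := by
  have hout {j : ℤ} (hj : ¬(0 ≤ j ∧ j < r)) : uu r j ∈ S := by
    rw [uu_eq_one_of_not_mem r hj]
    exact one_mem S
  have hdown (k : ℕ) : uu r (r - 1 - k) ∈ S ∧ uu r (r - k) ∈ S := by
    induction k with
    | zero => exact ⟨by simpa using hu, by simpa using hout (by omega)⟩
    | succ k ih =>
      refine ⟨?_, by convert ih.1 using 2; push_cast; ring⟩
      by_cases hk : 1 ≤ (r : ℤ) - 1 - k
      · rw [show (r : ℤ) - 1 - (k + 1 : ℕ) = r - 1 - k - 1 by push_cast; ring,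
          eq_sub_of_add_eq (xx_mul_uu r _).symm, show (r : ℤ) - 1 - k + 1 = r - k by ring]
        exact sub_mem (mul_mem (hx _ hk (by omega)) ih.1) ih.2
      · exact hout (by push_cast; omega)
  by_cases hi : i ≤ r - 1
  · convert (hdown (r - 1 - i).toNat).1 using 2
    omega
  · exact hout (by omega)

noncomputable def clusterGen (r : ℕ) : Fin (r + 1) → FF r :=
  Fin.lastCases (uu r (r - 1)) fun i => xx r i

section Generators

variable {r : ℕ}

theorem clusterGen_castSucc (i : Fin r) : clusterGen r i.castSucc = xx r i :=
  Fin.lastCases_castSucc _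

theorem clusterGen_last : clusterGen r (Fin.last r) = uu r (r - 1) := Fin.lastCases_last

theorem clusterGen_of_lt {k : ℕ} (hk : k < r) : clusterGen r ⟨k, by omega⟩ = xx r k :=
  clusterGen_castSucc ⟨k, hk⟩

theorem adjoin_range_clusterGen (hr : 1 ≤ r) :
    Algebra.adjoin ℤ (Set.range (clusterGen r)) =
      Algebra.adjoin ℤ
        ((Set.range fun i : Fin r => uu r i) ∪ Set.range fun i : Fin r => xx r i) := by
  apply le_antisymm <;> rw [Algebra.adjoin_le_iff]
  · rintro _ ⟨i, rfl⟩
    refine Fin.lastCases ?_ (fun i => ?_) i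
    · rw [clusterGen_last]
      exact Algebra.subset_adjoin (Or.inl ⟨⟨r - 1, by omega⟩, by simp [Nat.cast_sub hr]⟩)
    · rw [clusterGen_castSucc]
      exact Algebra.subset_adjoin (Or.inr ⟨i, rfl⟩)
  · have hx (i : Fin r) : xx r i ∈ Algebra.adjoin ℤ (Set.range (clusterGen r)) := by
      rw [← clusterGen_castSucc]
      exact Algebra.subset_adjoin ⟨_, rfl⟩
    rintro _ (⟨i, rfl⟩ | ⟨i, rfl⟩)
    · refine uu_mem_of_xx_mem _ ?_ (fun j hj hjr => ?_) _
      · rw [← clusterGen_last]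
        exact Algebra.subset_adjoin ⟨_, rfl⟩
      · lift j to ℕ using (by omega)
        exact hx ⟨j, by omega⟩
    · exact hx i

end Generators

theorem algebraicIndependent_uu (r : ℕ) : AlgebraicIndependent ℚ fun i : Fin r => uu r i := by
  convert (MvPolynomial.algebraicIndependent_X (Fin r) ℚ).map'
    (f := IsScalarTower.toAlgHom ℚ (MvPolynomial (Fin r) ℚ) (FF r)) (IsFractionRing.injective _ _)
  simp [uu_natCast]

theorem algebraicIndependent_of_uu_mem_adjoin {r : ℕ} (v : Fin r → FF r)
    (h : ∀ i : Fin r, uu r i ∈ Algebra.adjoin ℚ (Set.range v)) : AlgebraicIndependent ℚ v := by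
  have : Algebra.IsAlgebraic (Algebra.adjoin ℚ (Set.range v)) (FF r) := by
    refine IsFractionRing.isAlgebraic_of_forall_mem (A := MvPolynomial (Fin r) ℚ) _ fun p => ?_
    have hp : algebraMap _ (FF r) p = aeval (fun i : Fin r => uu r i) p := by
      simp [uu_natCast, ← Function.comp_def, MvPolynomial.aeval_algebraMap_apply]
    rw [hp]
    refine Algebra.adjoin_le (Set.range_subset_iff.2 h) ?_
    rw [Algebra.adjoin_range_eq_range_aeval]
    exact ⟨p, rfl⟩
  exact (Algebra.IsAlgebraic.isTranscendenceBasis_of_le_trdeg_of_finite ℚ v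
    (by simpa using (algebraicIndependent_uu r).cardinalMk_le_trdeg)).1

theorem algebraicIndependent_clusterGen_succ (m : ℕ) :
    AlgebraicIndependent ℤ fun i : Fin (m + 1) => clusterGen (m + 1) i.succ := by
  -- the `ℚ`-action on `FF` comes from `OreLocalization`, so this tower is not found by instance
  -- search
  have := @IsScalarTower.of_algebraMap_eq ℤ ℚ (FF (m + 1)) _ _ _ _ _ _ fun _ => by simp
  refine AlgebraicIndependent.restrictScalars (K := ℚ) Int.cast_injective
    (algebraicIndependent_of_uu_mem_adjoin _ fun i => uu_mem_of_xx_mem _ ?_ (fun j hj hjm => ?_) _)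
  · rw [← clusterGen_last, ← Fin.succ_last]
    exact Algebra.subset_adjoin ⟨_, rfl⟩
  · lift j to ℕ using (by omega)
    obtain ⟨k, rfl⟩ : ∃ k, j = k + 1 := ⟨j - 1, by omega⟩
    rw [← clusterGen_of_lt (by omega)]
    exact Algebra.subset_adjoin ⟨⟨k, by omega⟩, rfl⟩

theorem cheb_tvar_add_one_ne_zero (m : ℕ) : cheb m (tvar ℤ m) + 1 ≠ 0 := by
  intro h
  have h2 := congrArg (MvPolynomial.eval fun _ => (2 : ℤ)) h
  rw [map_add, map_one, map_cheb, cheb_congr m (t' := fun _ => 2) (fun i hi => by simp [tvar, hi]),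
    cheb_const_two, map_zero] at h2
  omega

theorem isRelPrime_cheb_tvar (m : ℕ) :
    IsRelPrime (cheb (m + 1) (tvar ℤ (m + 1))) ((cheb m fun i => tvar ℤ (m + 1) (i + 1)) + 1) := by
  -- expanded in `t_1`, the second polynomial is constant and the first has `t_1`-coefficient
  -- one less than it
  refine IsRelPrime.of_map (finSuccEquiv ℤ m) ?_
  have hb : finSuccEquiv ℤ m ((cheb m fun i => tvar ℤ (m + 1) (i + 1)) + 1) =
      Polynomial.C (cheb m (tvar ℤ m) + 1) := by
    simp [map_cheb, finSuccEquiv_tvar_succ]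
  have ha : (finSuccEquiv ℤ m (cheb (m + 1) (tvar ℤ (m + 1)))).coeff 1 = cheb m (tvar ℤ m) := by
    rcases m with _ | m
    · simp [cheb, finSuccEquiv_tvar_zero]
    · simp [finSuccEquiv_cheb_tvar]
  rw [hb]
  refine isRelPrime_C_of_isRelPrime_coeff (cheb_tvar_add_one_ne_zero m) 1 ?_
  rw [ha]
  exact IsCoprime.isRelPrime ⟨-1, 1, by ring⟩

theorem finSuccEquiv_cheb_tvar_sub_one (m : ℕ) :
    finSuccEquiv ℤ (m + 1) (cheb (m + 2) (tvar ℤ (m + 2)) - 1) =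
      Polynomial.C (cheb (m + 1) (tvar ℤ (m + 1))) * Polynomial.X -
        Polynomial.C ((cheb m fun i => tvar ℤ (m + 1) (i + 1)) + 1) := by
  rw [map_sub, finSuccEquiv_cheb_tvar, map_one, map_add, map_one]
  ring

theorem aeval_clusterGen_cheb_tvar (m : ℕ) :
    aeval (clusterGen (m + 1)) (cheb (m + 2) (tvar ℤ (m + 2))) = 1 := by
  rw [map_cheb]
  refine (cheb_congr _ fun k hk => ?_).trans (cheb_xx_uu_eq_one (r := m + 1) (by omega))
  rw [aeval_tvar _ hk]
  split_ifs with h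
  · exact clusterGen_of_lt h
  · obtain rfl : k = m + 1 := by omega
    exact clusterGen_last

theorem ker_aeval_clusterGen (m : ℕ) :
    RingHom.ker (aeval (clusterGen (m + 1)) : MvPolynomial (Fin (m + 2)) ℤ →ₐ[ℤ] FF (m + 1)) =
      Ideal.span {cheb (m + 2) (tvar ℤ (m + 2)) - 1} := by
  set ρ := (MvPolynomial.aeval (R := ℤ) fun i : Fin (m + 1) => clusterGen (m + 1) i.succ)
    |>.toRingHom
  have hρ : Function.Injective ρ :=
    algebraicIndependent_iff_injective_aeval.1 (algebraicIndependent_clusterGen_succ m)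
  have hψ (f : MvPolynomial (Fin (m + 2)) ℤ) :
      aeval (clusterGen (m + 1)) f = (finSuccEquiv ℤ (m + 1) f).eval₂ ρ (clusterGen (m + 1) 0) :=
    aeval_eq_eval₂_finSuccEquiv _ f
  have hξ : ρ (cheb (m + 1) (tvar ℤ (m + 1))) * clusterGen (m + 1) 0 =
      ρ ((cheb m fun i => tvar ℤ (m + 1) (i + 1)) + 1) := by
    have h := aeval_clusterGen_cheb_tvar m
    rw [← sub_eq_zero, ← map_one (MvPolynomial.aeval (R := ℤ) (clusterGen (m + 1))), ← map_sub,
      hψ, finSuccEquiv_cheb_tvar_sub_one] at h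
    simpa [sub_eq_zero] using h
  ext f
  rw [RingHom.mem_ker, Ideal.mem_span_singleton, hψ, ← map_dvd_iff (finSuccEquiv ℤ (m + 1)),
    finSuccEquiv_cheb_tvar_sub_one]
  exact eval₂_eq_zero_iff_dvd_of_isPrimitive hρ
    (isPrimitive_C_mul_X_sub_C (isRelPrime_cheb_tvar m)) hξ

/-- presentation of the type `A_r` cluster algebra:
`ℤ[t_0, ..., t_r]/(P_{r+1}(t_0, ..., t_r) - 1)` is isomorphic, as a `ℤ`-algebra, to the
subring of `ℚ(u_0, ..., u_{r-1})` generated by the `u_i` and the `x_i`, via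
`t_i ↦ x_i` for `0 ≤ i ≤ r-1` and `t_r ↦ u_{r-1}`. -/
theorem cluster_algebra_presentation_typeA (r : ℕ) (hr : 1 ≤ r) :
    ∃ φ : (MvPolynomial (Fin (r + 1)) ℤ ⧸
        Ideal.span {cheb (r + 1) (fun k => if h : k < r + 1 then X (⟨k, h⟩ : Fin (r + 1)) else 0)
          - 1}) ≃ₐ[ℤ]
      Algebra.adjoin ℤ ((Set.range fun i : Fin r => uu r i) ∪ (Set.range fun i : Fin r => xx r i)),
      (∀ i : Fin r, (φ (Ideal.Quotient.mk _ (X (Fin.castSucc i))) : FF r) = xx r i) ∧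
        (φ (Ideal.Quotient.mk _ (X (Fin.last r))) : FF r) = uu r ((r : ℤ) - 1) := by
  obtain ⟨m, rfl⟩ : ∃ m, r = m + 1 := ⟨r - 1, by omega⟩
  refine ⟨(Ideal.quotientEquivAlgOfEq ℤ (ker_aeval_clusterGen m).symm).trans <|
    (Ideal.quotientKerEquivRange _).trans (Subalgebra.equivOfEq _ _ ?_), fun i => ?_, ?_⟩
  · rw [← Algebra.adjoin_range_eq_range_aeval, adjoin_range_clusterGen hr]
  · exact (aeval_X _ _).trans (clusterGen_castSucc i)
  · exact (aeval_X _ _).trans clusterGen_last
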